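/- arXiv:2602.11725 — 2 statements merged into one kernel-verified Lean document; each statement's English description precedes it below -/
import Mathlib

section
/- Let λ ∈ ℂ, r ∈ ℂ with r² = 27, and α, β ∈ ℂ nonzero with αβ = 4. Define P(t) = (α(t−λ)³)/(2r) − 2t(t−1)/(rα) and Q(t) = (α(t−λ)³)/2 + 2t(t−1)/α. Then Q² − 27P² = 4t(t−1)(t−λ)³, and hence the Weierstrass discriminant of A = t(t−1)(t−λ), B = t(t−1)P satisfies 4A³ + 27B² = t²(t−1)²Q². -/
open Polynomial in
/-- with P = α(t−λ)³/(2r) − 2t(t−1)/(rα) and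
Q = α(t−λ)³/2 + 2t(t−1)/α, r² = 27, αβ = 4, one has
Q² − 27P² = 4t(t−1)(t−λ)³ and hence 4A³ + 27B² = t²(t−1)²Q² for
A = t(t−1)(t−λ), B = t(t−1)P. -/
theorem stmt6 (lam r α β : ℂ) (hr : r ^ 2 = 27) (hα : α ≠ 0) (hβ : β ≠ 0)
    (hαβ : α * β = 4) :
    let P : Polynomial ℂ := C (α / (2 * r)) * (X - C lam) ^ 3 - C (2 / (r * α)) * (X * (X - 1))
    let Q : Polynomial ℂ := C (α / 2) * (X - C lam) ^ 3 + C (2 / α) * (X * (X - 1))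
    let A : Polynomial ℂ := X * (X - 1) * (X - C lam)
    let B : Polynomial ℂ := X * (X - 1) * P
    Q ^ 2 - 27 * P ^ 2 = 4 * X * (X - 1) * (X - C lam) ^ 3
      ∧ 4 * A ^ 3 + 27 * B ^ 2 = X ^ 2 * (X - 1) ^ 2 * Q ^ 2 := by
  intro P Q A B
  have hr0 : r ≠ 0 := by intro h; rw [h] at hr; norm_num at hr
  have hA1 : C (α / (2 * r)) = C (α / 2) * C r⁻¹ := by
    rw [← C_mul]; congr 1; field_simp
  have hB1 : C (2 / (r * α)) = C (2 / α) * C r⁻¹ := by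
    rw [← C_mul]; congr 1; field_simp
  have h27 : (27 : Polynomial ℂ) * (C r⁻¹) ^ 2 = 1 := by
    have h : (27 : Polynomial ℂ) = C 27 := (map_ofNat C 27).symm
    rw [h, ← C_pow, ← C_mul, ← C_1]
    congr 1
    rw [← hr]
    field_simp
  have hab : C (α / 2) * C (2 / α) = 1 := by
    rw [← C_mul, ← C_1]; congr 1; field_simp
  constructor
  · show Q ^ 2 - 27 * P ^ 2 = _
    simp only [P, Q, hA1, hB1]
    linear_combination (-(C (α/2) * (X - C lam) ^ 3 - C (2/α) * (X * (X - 1))) ^ 2) * h27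
      + 4 * (X - C lam) ^ 3 * (X * (X - 1)) * hab
  · show 4 * A ^ 3 + 27 * B ^ 2 = _
    simp only [A, B, P, Q, hA1, hB1]
    linear_combination ((X * (X - 1)) ^ 2 * (C (α/2) * (X - C lam) ^ 3 - C (2/α) * (X * (X - 1))) ^ 2) * h27
      + (-4 * (X * (X - 1)) ^ 3 * (X - C lam) ^ 3) * hab
end

section
/- Restrict the Chisini construction to a line through p = (0:0:1): let c(u,v,w) = aw³ + b(u,v)w² + c₁(u,v)w + d(u,v) be viewed as a cubic in w with coefficients depending on a point of the line, and let q(w) = c''(w)·c(w) − (1/2)(c'(w))² be the associated quartic in w (derivatives in w). Writing q(w) = q₀w⁴ + q₁w³ + q₂w² + q₃w + q₄ explicitly in terms of a, b, c₁, d, the invariant I = 12q₀q₄ − 3q₁q₃ + q₂² vanishes identically. Concretely: for the cubic c(w) = aw³ + bw² + cw + d over any commutative ring containing 1/2, the quartic q(w) = (6aw + 2b)(aw³ + bw² + cw + d) − (1/2)(3aw² + 2bw + c)² has vanishing invariant 12q₀q₄ − 3q₁q₃ + q₂² = 0. -/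
/-!
Half of `(c')²` cancels the `b²w²` and `bcw` terms of `c''·c`, leaving
`q = (3/2)a²w⁴ + 2ab w³ + 3ac w² + 6ad w + (2bd − c²/2)`.
In `12q₀q₄ − 3q₁q₃ + q₂²` the `a²bd` terms and the `a²c²` terms then cancel in pairs.
-/

open Polynomial

section Quartic

variable {R : Type*} [CommRing R]

noncomputable def quartic (q₀ q₁ q₂ q₃ q₄ : R) : R[X] :=
  C q₀ * X ^ 4 + C q₁ * X ^ 3 + C q₂ * X ^ 2 + C q₃ * X + C q₄

def quarticInvariant (q : R[X]) : R :=
  12 * q.coeff 4 * q.coeff 0 - 3 * q.coeff 3 * q.coeff 1 + q.coeff 2 ^ 2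

theorem quarticInvariant_quartic (q₀ q₁ q₂ q₃ q₄ : R) :
    quarticInvariant (quartic q₀ q₁ q₂ q₃ q₄) = 12 * q₀ * q₄ - 3 * q₁ * q₃ + q₂ ^ 2 := by
  simp [quarticInvariant, quartic, coeff_X_pow, coeff_X, coeff_C]

variable [Invertible (2 : R)]

theorem chisini_quartic_eq (a b c d : R) :
    (C (6 * a) * X + C (2 * b)) * (C a * X ^ 3 + C b * X ^ 2 + C c * X + C d)
        - C (⅟(2 : R)) * (C (3 * a) * X ^ 2 + C (2 * b) * X + C c) ^ 2
      = quartic (3 * ⅟2 * a ^ 2) (2 * a * b) (3 * a * c) (6 * a * d)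
          (2 * b * d - ⅟2 * c ^ 2) := by
  have h : (2 : R[X]) * C (⅟2) = 1 := by
    rw [← C_ofNat, ← C_mul, mul_invOf_self, C_1]
  simp only [quartic, map_sub, map_mul, map_pow, map_ofNat]
  linear_combination (-(6 * C a ^ 2 * X ^ 4 + 6 * C a * C b * X ^ 3
    + (3 * C a * C c + 2 * C b ^ 2) * X ^ 2 + 2 * C b * C c * X)) * h

theorem quarticInvariant_chisini_quartic (a b c d : R) :
    quarticInvariant (quartic (3 * ⅟2 * a ^ 2) (2 * a * b) (3 * a * c) (6 * a * d)
      (2 * b * d - ⅟2 * c ^ 2)) = 0 := by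
  rw [quarticInvariant_quartic]
  linear_combination (36 * a ^ 2 * b * d - 9 * a ^ 2 * c ^ 2 * (2 * ⅟2 + 1)) *
    mul_invOf_self (2 : R)

end Quartic

open Polynomial in
/-- for a cubic c(w) = aw³+bw²+cw+d over a commutative ring with 1/2,
the quartic q = c''·c − (1/2)(c')² has vanishing invariant 12q₀q₄ − 3q₁q₃ + q₂²,
where qᵢ is the coefficient of w^(4−i) in q. -/
theorem stmt9 (R : Type*) [CommRing R] [Invertible (2 : R)] (a b c d : R) :
    let q : Polynomial R :=
      (Polynomial.C (6 * a) * X + Polynomial.C (2 * b)) *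
          (Polynomial.C a * X ^ 3 + Polynomial.C b * X ^ 2 + Polynomial.C c * X
            + Polynomial.C d)
        - Polynomial.C (⅟(2 : R)) *
          (Polynomial.C (3 * a) * X ^ 2 + Polynomial.C (2 * b) * X + Polynomial.C c) ^ 2
    12 * q.coeff 4 * q.coeff 0 - 3 * q.coeff 3 * q.coeff 1 + (q.coeff 2) ^ 2 = 0 := by
  intro q
  change quarticInvariant q = 0
  rw [show q = _ from chisini_quartic_eq a b c d]
  exact quarticInvariant_chisini_quartic a b c d
end
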